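/- arXiv:1910.00119 — 2 statements merged into one kernel-verified Lean document; each statement's English description precedes it below -/
import Mathlib

section
/- Let A, B, Q be real n×n matrices with spectral radius ρ(A) < 1. If Y satisfies the Lyapunov equation Y = A Y Aᵀ + Q and M satisfies M = Aᵀ M A + Bᵀ, then Trace(B Y) = Trace(Qᵀ M). -/
open Matrix

/-- `ρ(A) < 1` for a real square matrix: every complex eigenvalue has modulus `< 1`. -/
def specLt1 {n : ℕ} (A : Matrix (Fin n) (Fin n) ℝ) : Prop :=
  ∀ z ∈ spectrum ℂ (A.map (algebraMap ℝ ℂ)), ‖z‖ < 1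

theorem trace_duality_lyapunov {n : ℕ} (A B Q Y M : Matrix (Fin n) (Fin n) ℝ)
    (hA : specLt1 A)
    (hY : Y = A * Y * Aᵀ + Q)
    (hM : M = Aᵀ * M * A + Bᵀ) :
    (B * Y).trace = (Qᵀ * M).trace := by
  have hB : B = Mᵀ - Aᵀ * Mᵀ * A := by
    have h := congrArg Matrix.transpose hM
    simp only [Matrix.transpose_add, Matrix.transpose_mul, Matrix.transpose_transpose,
      ← mul_assoc] at h
    exact eq_sub_of_add_eq' h.symm
  have hQ : Qᵀ = Yᵀ - A * Yᵀ * Aᵀ := by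
    have h := congrArg Matrix.transpose hY
    simp only [Matrix.transpose_add, Matrix.transpose_mul, Matrix.transpose_transpose,
      ← mul_assoc] at h
    exact eq_sub_of_add_eq' h.symm
  rw [hB, hQ, Matrix.sub_mul, Matrix.sub_mul, Matrix.trace_sub, Matrix.trace_sub]
  have h1 : (Mᵀ * Y).trace = (Yᵀ * M).trace := by
    rw [← Matrix.trace_transpose (Yᵀ * M), Matrix.transpose_mul, Matrix.transpose_transpose]
  have h2 : (Aᵀ * Mᵀ * A * Y).trace = (A * Yᵀ * Aᵀ * M).trace := by
    rw [← Matrix.trace_transpose (A * Yᵀ * Aᵀ * M)]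
    simp only [Matrix.transpose_mul, Matrix.transpose_transpose, ← mul_assoc]
    calc (Aᵀ * Mᵀ * A * Y).trace
        = ((Aᵀ * Mᵀ) * (A * Y)).trace := by rw [mul_assoc]
      _ = ((A * Y) * (Aᵀ * Mᵀ)).trace := Matrix.trace_mul_comm _ _
      _ = ((A * Y * Aᵀ) * Mᵀ).trace := by rw [mul_assoc, mul_assoc, mul_assoc]
      _ = (Mᵀ * (A * Y * Aᵀ)).trace := Matrix.trace_mul_comm _ _
      _ = (Mᵀ * A * Y * Aᵀ).trace := by rw [← mul_assoc, ← mul_assoc]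
  rw [h1, h2]
end

section
/- With the setup of the steady-state filter (ρ(A − K C A) < 1, M the unique solution of M = (A − K C A)ᵀ M (A − K C A) + Iₙ, and S(K) the unique solution of S = (A − K C A) S (A − K C A)ᵀ + K Kᵀ), the map R ↦ Trace(P(K,R)) is linear in R with derivative Kᵀ M K, and Trace(Kᵀ M K) = Trace(S(K)). -/
open Matrix

lemma trace_lyap {n : ℕ} (A' M B D : Matrix (Fin n) (Fin n) ℝ)
    (hD : D = A' * D * A'ᵀ + B) (hM : M = A'ᵀ * M * A' + 1) :
    D.trace = (B * M).trace := by
  have h1 : (1 : Matrix (Fin n) (Fin n) ℝ) = M - A'ᵀ * M * A' := by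
    rw [eq_sub_iff_add_eq, add_comm]; exact hM.symm
  have hB : A' * D * A'ᵀ = D - B := eq_sub_iff_add_eq.mpr hD.symm
  calc D.trace = (D * (M - A'ᵀ * M * A')).trace := by rw [← h1, mul_one]
    _ = (D * M).trace - (D * (A'ᵀ * M * A')).trace := by rw [mul_sub, trace_sub]
    _ = (D * M).trace - ((A' * D * A'ᵀ) * M).trace := by
        congr 1
        rw [show D * (A'ᵀ * M * A') = (D * A'ᵀ * M) * A' by simp [Matrix.mul_assoc],
            Matrix.trace_mul_comm]
        simp [Matrix.mul_assoc]
    _ = (B * M).trace := by rw [hB, sub_mul, trace_sub]; abel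

theorem trace_P_linear_in_R {n m : ℕ}
    (A : Matrix (Fin n) (Fin n) ℝ) (C : Matrix (Fin m) (Fin n) ℝ)
    (K : Matrix (Fin n) (Fin m) ℝ) (Q : Matrix (Fin n) (Fin n) ℝ)
    (P : Matrix (Fin m) (Fin m) ℝ → Matrix (Fin n) (Fin n) ℝ)
    (M S : Matrix (Fin n) (Fin n) ℝ)
    (hstab : specLt1 (A - K * C * A))
    (hP : ∀ R : Matrix (Fin m) (Fin m) ℝ,
      P R = (A - K * C * A) * P R * (A - K * C * A)ᵀ +
        (1 - K * C) * Q * (1 - K * C)ᵀ + K * R * Kᵀ)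
    (hM : M = (A - K * C * A)ᵀ * M * (A - K * C * A) + 1)
    (hS : S = (A - K * C * A) * S * (A - K * C * A)ᵀ + K * Kᵀ) :
    (∀ R ΔR : Matrix (Fin m) (Fin m) ℝ,
      (P (R + ΔR)).trace = (P R).trace + (Kᵀ * M * K * ΔR).trace) ∧
    (Kᵀ * M * K).trace = S.trace := by
  constructor
  · intro R ΔR
    have hD : P (R + ΔR) - P R =
        (A - K * C * A) * (P (R + ΔR) - P R) * (A - K * C * A)ᵀ + K * ΔR * Kᵀ := by
      nth_rewrite 1 [hP (R + ΔR)]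
      nth_rewrite 1 [hP R]
      simp only [Matrix.mul_add, Matrix.add_mul, mul_add, add_mul]
      noncomm_ring
    have := trace_lyap (A - K * C * A) M (K * ΔR * Kᵀ) (P (R + ΔR) - P R) hD hM
    rw [trace_sub] at this
    have hc : (K * ΔR * Kᵀ * M).trace = (Kᵀ * M * K * ΔR).trace := by
      rw [show K * ΔR * Kᵀ * M = K * (ΔR * Kᵀ * M) by simp [Matrix.mul_assoc],
          Matrix.trace_mul_comm, Matrix.trace_mul_comm (Kᵀ * M * K) ΔR]
      congr 1
      simp [Matrix.mul_assoc]
    rw [hc] at this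
    linarith
  · have := trace_lyap (A - K * C * A) M (K * Kᵀ) S hS hM
    rw [this, show K * Kᵀ * M = K * (Kᵀ * M) by simp [Matrix.mul_assoc],
        Matrix.trace_mul_comm]
end
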